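/- For every real number x > 0, one has sqrt(2e) * ((x + 1/2)/e)^(x + 1/2) ≤ Γ(x + 1) ≤ sqrt(2π) * ((x + 1/2)/e)^(x + 1/2), where Γ denotes the Gamma function; moreover the constants sqrt(2e) and sqrt(2π) make both inequalities valid for all x > 0. -/

import Mathlib

open Real Filter Topology

/-!
Put `h(x) = log Γ(x+1) - (x+½) log(x+½) + (x+½)`, so that `Γ(x+1) = exp(h(x)) ((x+½)/e)^(x+½)`
and `h(0) = log √(2e)`. The recurrence of `Γ` gives `h(x+1) = h(x) + δ(x+1)`, where the explicit
`δ` decreases to `0` on `(1/2, ∞)` because `log ((a+½)/(a-½)) ≥ 1/a`. Hence `h(x+n)` increases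
in `n`, and by Stirling's formula it tends to `log √(2π)`: this is the upper bound. And
`h(x+n) - h(n)` decreases in `n` to `0`, so `h(x) ≥ h(0)`: this is the lower bound.
-/

lemma two_div_two_mul_add_one_le_log_one_add_inv {a : ℝ} (ha : 0 < a) :
    2 / (2 * a + 1) ≤ log (1 + a⁻¹) := by
  simpa [div_eq_mul_inv] using le_hasSum (hasSum_log_one_add_inv ha) 0 fun k _ => by positivity

lemma tendsto_add_mul_log_add_sub_log (c : ℝ) :
    Tendsto (fun t : ℝ => (t + c) * (log (t + c) - log t)) atTop (𝓝 c) := by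
  have hlog : Tendsto (fun t : ℝ => log (1 + c / t)) atTop (𝓝 0) := by
    have h : Tendsto (fun t : ℝ => c / t) atTop (𝓝 0) := tendsto_const_nhds.div_atTop tendsto_id
    have h' : Tendsto (fun t : ℝ => 1 + c / t) atTop (𝓝 1) := by simpa using h.const_add 1
    simpa [Function.comp_def] using (continuousAt_log one_ne_zero).tendsto.comp h'
  have key := (tendsto_mul_log_one_add_div_atTop c).add (hlog.const_mul c)
  rw [mul_zero, add_zero] at key
  refine key.congr' ?_
  filter_upwards [eventually_gt_atTop 0, eventually_gt_atTop (-c)] with t ht htc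
  rw [← log_div (by linarith) ht.ne', add_div, div_self ht.ne', add_mul]

noncomputable def stirlingError (x : ℝ) : ℝ :=
  log (Gamma (x + 1)) - (x + 1 / 2) * log (x + 1 / 2) + (x + 1 / 2)

noncomputable def stirlingErrorStep (a : ℝ) : ℝ :=
  log a - (a + 1 / 2) * log (a + 1 / 2) + (a - 1 / 2) * log (a - 1 / 2) + 1

lemma stirlingError_add_one {x : ℝ} (hx : -1 < x) :
    stirlingError (x + 1) = stirlingError x + stirlingErrorStep (x + 1) := by
  have hx1 : 0 < x + 1 := by linarith
  rw [stirlingError, stirlingError, stirlingErrorStep, Gamma_add_one hx1.ne',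
    log_mul hx1.ne' (Gamma_pos_of_pos hx1).ne', show x + 1 - 1 / 2 = x + 1 / 2 by ring]
  ring

lemma hasDerivAt_stirlingErrorStep {a : ℝ} (ha : 1 / 2 < a) :
    HasDerivAt stirlingErrorStep (a⁻¹ - (log (a + 1 / 2) - log (a - 1 / 2))) a := by
  have hplus := (hasDerivAt_mul_log (x := a + 1 / 2) (by linarith)).comp_add_const a (1 / 2)
  have hminus := (hasDerivAt_mul_log (x := a - 1 / 2) (by linarith)).comp_sub_const a (1 / 2)
  exact ((((hasDerivAt_log (by linarith)).sub hplus).add hminus).add_const 1).congr_deriv (by ring)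

lemma inv_le_log_add_half_sub_log_sub_half {a : ℝ} (ha : 1 / 2 < a) :
    a⁻¹ ≤ log (a + 1 / 2) - log (a - 1 / 2) := by
  have ha' : a - 1 / 2 ≠ 0 := by linarith
  have h := two_div_two_mul_add_one_le_log_one_add_inv (a := a - 1 / 2) (by linarith)
  rwa [show 2 / (2 * (a - 1 / 2) + 1) = a⁻¹ by field_simp; ring,
    show 1 + (a - 1 / 2)⁻¹ = (a + 1 / 2) / (a - 1 / 2) by
      rw [eq_div_iff ha', add_mul, inv_mul_cancel₀ ha']; ring,
    log_div (by linarith) (by linarith)] at h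

lemma antitoneOn_stirlingErrorStep : AntitoneOn stirlingErrorStep (Set.Ioi (1 / 2)) := by
  refine antitoneOn_of_hasDerivWithinAt_nonpos (convex_Ioi _)
    (fun a ha => (hasDerivAt_stirlingErrorStep ha).continuousAt.continuousWithinAt)
    (fun a ha => (hasDerivAt_stirlingErrorStep ?_).hasDerivWithinAt) fun a ha => ?_
  · rwa [interior_Ioi] at ha
  · rw [interior_Ioi] at ha
    linarith [inv_le_log_add_half_sub_log_sub_half ha]

lemma tendsto_stirlingErrorStep : Tendsto stirlingErrorStep atTop (𝓝 0) := by
  have h := ((tendsto_add_mul_log_add_sub_log (-(1 / 2))).sub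
    (tendsto_add_mul_log_add_sub_log (1 / 2))).const_add 1
  rw [show (1 : ℝ) + (-(1 / 2) - 1 / 2) = 0 by norm_num] at h
  simp only [← sub_eq_add_neg] at h
  refine h.congr fun a => ?_
  rw [stirlingErrorStep]
  ring

lemma stirlingErrorStep_nonneg {a : ℝ} (ha : 1 / 2 < a) : 0 ≤ stirlingErrorStep a :=
  le_of_tendsto tendsto_stirlingErrorStep <| (eventually_ge_atTop a).mono fun _ hb =>
    antitoneOn_stirlingErrorStep ha (ha.trans_le hb) hb

lemma tendsto_log_Gamma_add_nat_sub {x : ℝ} (hx : 0 ≤ x) :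
    Tendsto (fun n : ℕ => log (Gamma (x + n + 1)) - log n.factorial - x * log n) atTop (𝓝 0) := by
  rcases hx.eq_or_lt with rfl | hx
  · simp [add_comm, Gamma_nat_eq_factorial]
  have hlogGamma : ∀ {y : ℝ}, 0 < y → (log ∘ Gamma) (y + 1) = (log ∘ Gamma) y + log y := by
    intro y hy
    simp only [Function.comp_apply]
    rw [Gamma_add_one hy.ne', log_mul hy.ne' (Gamma_pos_of_pos hy).ne', add_comm]
  have h := (BohrMollerup.tendsto_log_gamma hx).const_sub (log (Gamma x))
  rw [sub_self] at h
  refine h.congr fun n => ?_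
  have := BohrMollerup.f_add_nat_eq hlogGamma hx (n + 1)
  simp only [Function.comp_apply, Nat.cast_add_one, ← add_assoc] at this
  rw [this, BohrMollerup.logGammaSeq]
  ring

lemma tendsto_log_factorial_sub :
    Tendsto (fun n : ℕ => log n.factorial - (n + 1 / 2) * log n + n) atTop
      (𝓝 (log √(2 * π))) := by
  have h := ((continuousAt_log (sqrt_pos.2 pi_pos).ne').tendsto.comp
    Stirling.tendsto_stirlingSeq_sqrt_pi).add_const (1 / 2 * log 2)
  rw [sqrt_mul zero_le_two, log_mul (by positivity) (sqrt_pos.2 pi_pos).ne', log_sqrt zero_le_two]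
  rw [show log √π + 1 / 2 * log 2 = log 2 / 2 + log √π by ring] at h
  refine h.congr' ?_
  filter_upwards [eventually_ne_atTop 0] with n hn
  have hn : (n : ℝ) ≠ 0 := Nat.cast_ne_zero.2 hn
  simp only [Function.comp_apply, Stirling.log_stirlingSeq_formula, log_mul two_ne_zero hn,
    log_div hn (exp_ne_zero 1), log_exp]
  ring

lemma tendsto_stirlingError_add_nat {x : ℝ} (hx : 0 ≤ x) :
    Tendsto (fun n : ℕ => stirlingError (x + n)) atTop (𝓝 (log √(2 * π))) := by
  have h := ((tendsto_log_Gamma_add_nat_sub hx).add tendsto_log_factorial_sub).sub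
    (((tendsto_add_mul_log_add_sub_log (x + 1 / 2)).comp tendsto_natCast_atTop_atTop).sub_const
      (x + 1 / 2))
  rw [zero_add, sub_self, sub_zero] at h
  refine h.congr fun n => ?_
  simp only [Function.comp_apply, stirlingError]
  ring_nf

lemma stirlingError_le {x : ℝ} (hx : 0 ≤ x) : stirlingError x ≤ log √(2 * π) := by
  have hmono : Monotone fun n : ℕ => stirlingError (x + n) :=
    monotone_nat_of_le_succ fun n => by
      have hn : (0 : ℝ) ≤ n := n.cast_nonneg
      rw [Nat.cast_succ, ← add_assoc, stirlingError_add_one (by linarith)]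
      exact le_add_of_nonneg_right (stirlingErrorStep_nonneg (by linarith))
  simpa using hmono.ge_of_tendsto (tendsto_stirlingError_add_nat hx) 0

lemma stirlingError_zero_le {x : ℝ} (hx : 0 ≤ x) : stirlingError 0 ≤ stirlingError x := by
  have hanti : Antitone fun n : ℕ => stirlingError (x + n) - stirlingError n :=
    antitone_nat_of_succ_le fun n => by
      have hn : (0 : ℝ) ≤ n := n.cast_nonneg
      rw [Nat.cast_succ, ← add_assoc, stirlingError_add_one (by linarith),
        stirlingError_add_one (by linarith)]
      have := antitoneOn_stirlingErrorStep (a := (n : ℝ) + 1) (b := x + n + 1)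
        (Set.mem_Ioi.2 (by linarith)) (Set.mem_Ioi.2 (by linarith)) (by linarith)
      linarith
  have h := (tendsto_stirlingError_add_nat hx).sub (tendsto_stirlingError_add_nat le_rfl)
  simp only [zero_add, sub_self] at h
  simpa using hanti.le_of_tendsto h 0

lemma stirlingError_zero : stirlingError 0 = log √(2 * exp 1) := by
  rw [stirlingError, zero_add, zero_add, Gamma_one, log_one, one_div, log_inv,
    log_sqrt (by positivity), log_mul two_ne_zero (exp_ne_zero 1), log_exp]
  ring

lemma Gamma_add_one_eq_exp_stirlingError_mul {x : ℝ} (hx : -1 / 2 < x) :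
    Gamma (x + 1) = exp (stirlingError x) * ((x + 1 / 2) / exp 1) ^ (x + 1 / 2) := by
  have hx' : 0 < x + 1 / 2 := by linarith
  rw [← exp_log (Gamma_pos_of_pos (by linarith : 0 < x + 1)), rpow_def_of_pos (by positivity),
    log_div hx'.ne' (exp_ne_zero 1), log_exp, ← exp_add, stirlingError]
  congr 1
  ring

theorem stmt_0 :
    ∀ x : ℝ, 0 < x →
      Real.sqrt (2 * Real.exp 1) * ((x + 1 / 2) / Real.exp 1) ^ (x + 1 / 2)
          ≤ Real.Gamma (x + 1) ∧
      Real.Gamma (x + 1)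
          ≤ Real.sqrt (2 * Real.pi) * ((x + 1 / 2) / Real.exp 1) ^ (x + 1 / 2) := by
  intro x hx
  rw [Gamma_add_one_eq_exp_stirlingError_mul (by linarith)]
  constructor
  · rw [← exp_log (sqrt_pos.2 (by positivity : (0 : ℝ) < 2 * exp 1)), ← stirlingError_zero]
    gcongr
    exact stirlingError_zero_le hx.le
  · rw [← exp_log (sqrt_pos.2 (by positivity : (0 : ℝ) < 2 * π))]
    gcongr
    exact stirlingError_le hx.le
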